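/- Let Δ ∈ ℝ, and for θ ∈ ℝ set a(θ) = (θ - Δ)/2 and c(θ) = (θ + Δ)/2. Let b_n(θ) and u_n(θ) be the even-case para-Racah recurrence coefficients with parameters a = a(θ), c = c(θ) and α = 1/2. Then as θ → +∞: for every n ∈ {0,…,N}, -(2 b_n(θ) + 2 a(θ)²)/θ tends to (N - 1 + 2Δ)/2 + ((2Δ-1)(N+1)/4)·(1/(2n-N-1) - 1/(2n-N+1)); and for every n ∈ {1,…,N}, 4 u_n(θ)/θ² tends to n(N+1-n)(2n-N-2Δ)(2n-N-2+2Δ)/(4(2n-N-1)²). -/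

import Mathlib

open Filter Topology Polynomial

noncomputable section

/-- The recurrence coefficient `bₙ` of the para-Racah polynomials, even case `N = 2j`. -/
def bEven (j : ℕ) (a c : ℝ) (n : ℕ) : ℝ :=
  ((n : ℝ) - 2 * j) * ((n : ℝ) + a + c) * ((n : ℝ) + a - c - j + 1) /
      (2 * (2 * (n : ℝ) + 1 - 2 * j)) +
    (n : ℝ) * ((n : ℝ) - 2 * j - a - c) * ((n : ℝ) - j - 1 + c - a) /
      (2 * (2 * (n : ℝ) - 1 - 2 * j)) - a ^ 2

/-- The recurrence coefficient `uₙ` of the para-Racah polynomials, even case `N = 2j`. -/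
def uEven (j : ℕ) (a c α : ℝ) (n : ℕ) : ℝ :=
  if n = j then
    -(1 - α) * (j : ℝ) * ((j : ℝ) + 1) * (a - c) * (a - c + 1) * (a + c + j - 1) * (a + c + j) / 2
  else if n = j + 1 then
    -α * (j : ℝ) * ((j : ℝ) + 1) * (a - c) * (a - c + 1) * (a + c + j - 1) * (a + c + j) / 2
  else
    (n : ℝ) * (2 * (j : ℝ) - n + 1) * (a + c + n - 1) * (a - c + j - n + 1)
        * (-a + c + j - n) * (a + c + 2 * j - n) /
      (4 * (2 * (j : ℝ) - 2 * n + 1) ^ 2)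

/-! With `a = (θ - Δ)/2` and `c = (θ + Δ)/2` one has `a + c = θ` and `a - c = -Δ`. Hence
`bₙ + a²` is affine in `θ`, while `uₙ` is a constant times `(θ + p)(θ + q)` (the factors
`a - c + …` only involve `Δ`). Dividing by `θ` resp. `θ²`, the limits are the leading
coefficients; the denominators `2n - N ± 1` are odd integers, so never zero. -/

lemma tendsto_mul_add_div_self_atTop (A B : ℝ) :
    Tendsto (fun θ : ℝ => (A * θ + B) / θ) atTop (𝓝 A) := by
  have h : Tendsto (fun θ : ℝ => A + B * θ⁻¹) atTop (𝓝 (A + B * 0)) :=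
    tendsto_const_nhds.add (tendsto_inv_atTop_zero.const_mul B)
  rw [mul_zero, add_zero] at h
  refine h.congr' ?_
  filter_upwards [eventually_ne_atTop 0] with θ hθ
  field_simp

lemma tendsto_mul_add_mul_add_div_sq_atTop (C p q : ℝ) :
    Tendsto (fun θ : ℝ => C * (θ + p) * (θ + q) / θ ^ 2) atTop (𝓝 C) := by
  have h := ((tendsto_mul_add_div_self_atTop 1 p).const_mul C).mul
    (tendsto_mul_add_div_self_atTop 1 q)
  rw [mul_one, mul_one] at h
  refine h.congr fun θ => ?_
  ring

lemma two_mul_natCast_sub_add_one_ne_zero (m k : ℕ) : 2 * ((m : ℝ) - k) + 1 ≠ 0 := by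
  have h : (2 * m + 1 : ℝ) ≠ 2 * k := by exact_mod_cast (by omega : 2 * m + 1 ≠ 2 * k)
  contrapose! h
  linarith

lemma two_mul_natCast_sub_sub_one_ne_zero (m k : ℕ) : 2 * ((m : ℝ) - k) - 1 ≠ 0 := by
  have h := two_mul_natCast_sub_add_one_ne_zero k m
  contrapose! h
  linarith

theorem tendsto_bEven_paraKrawtchouk (j n : ℕ) (Δ : ℝ) :
    Tendsto (fun θ : ℝ =>
        -(2 * bEven j ((θ - Δ) / 2) ((θ + Δ) / 2) n + 2 * ((θ - Δ) / 2) ^ 2) / θ)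
      atTop (𝓝 (((2 * (j : ℝ)) - 1 + 2 * Δ) / 2 +
        (2 * Δ - 1) * ((2 * (j : ℝ)) + 1) / 4 *
          (1 / (2 * (n : ℝ) - (2 * (j : ℝ)) - 1) - 1 / (2 * (n : ℝ) - (2 * (j : ℝ)) + 1)))) := by
  have h₁ := two_mul_natCast_sub_add_one_ne_zero n j
  have h₂ := two_mul_natCast_sub_sub_one_ne_zero n j
  convert tendsto_mul_add_div_self_atTop
    (-(n - 2 * j) * (n - Δ - j + 1) / (2 * n - 2 * j + 1) + n * (n - j - 1 + Δ) / (2 * n - 2 * j - 1))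
    (-n * (n - 2 * j) * (n - Δ - j + 1) / (2 * n - 2 * j + 1)
      - n * (n - 2 * j) * (n - j - 1 + Δ) / (2 * n - 2 * j - 1)) using 1
  · ext θ
    congr 1
    simp only [bEven]
    -- `field_simp` only cancels denominators written exactly as in `h₁`, `h₂`
    rw [show 2 * (n : ℝ) + 1 - 2 * j = 2 * (n - j) + 1 by ring,
      show 2 * (n : ℝ) - 1 - 2 * j = 2 * (n - j) - 1 by ring]
    field_simp
    ring
  · congr 1
    field_simp
    ring

lemma uEven_half_of_eq_or_eq {j n : ℕ} (hn : n = j ∨ n = j + 1) (a c : ℝ) :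
    uEven j a c (1 / 2) n =
      -(j : ℝ) * (j + 1) * (a - c) * (a - c + 1) * (a + c + j - 1) * (a + c + j) / 4 := by
  rcases hn with rfl | rfl
  · rw [uEven, if_pos rfl]; ring
  · rw [uEven, if_neg (by omega), if_pos rfl]; ring

theorem tendsto_uEven_paraKrawtchouk (j n : ℕ) (Δ : ℝ) :
    Tendsto (fun θ : ℝ =>
        4 * uEven j ((θ - Δ) / 2) ((θ + Δ) / 2) (1 / 2) n / θ ^ 2)
      atTop (𝓝 ((n : ℝ) * ((2 * (j : ℝ)) + 1 - n)
        * (2 * (n : ℝ) - (2 * (j : ℝ)) - 2 * Δ)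
        * (2 * (n : ℝ) - (2 * (j : ℝ)) - 2 + 2 * Δ) /
        (4 * (2 * (n : ℝ) - (2 * (j : ℝ)) - 1) ^ 2))) := by
  by_cases hmid : n = j ∨ n = j + 1
  · convert tendsto_mul_add_mul_add_div_sq_atTop ((j : ℝ) * (j + 1) * Δ * (1 - Δ)) (j - 1) j
      using 1
    · ext θ
      rw [uEven_half_of_eq_or_eq hmid]
      ring
    · congr 1
      rcases hmid with rfl | rfl <;> push_cast <;> ring
  · rw [not_or] at hmid
    have h₁ := two_mul_natCast_sub_add_one_ne_zero j n
    have h₂ := two_mul_natCast_sub_sub_one_ne_zero n j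
    convert tendsto_mul_add_mul_add_div_sq_atTop
      (n * (2 * j - n + 1) * (j - n + 1 - Δ) * (Δ + j - n) / (2 * ((j : ℝ) - n) + 1) ^ 2)
      (n - 1) (2 * j - n) using 1
    · ext θ
      congr 1
      simp only [uEven, if_neg hmid.1, if_neg hmid.2]
      field_simp
      ring
    · congr 1
      field_simp
      ring

theorem paraRacahEven_to_paraKrawtchouk_general (j : ℕ) (Δ : ℝ) :
    (∀ n : ℕ, n ≤ 2 * j →
      Tendsto (fun θ : ℝ =>
          -(2 * bEven j ((θ - Δ) / 2) ((θ + Δ) / 2) n + 2 * ((θ - Δ) / 2) ^ 2) / θ)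
        atTop (𝓝 (((2 * (j : ℝ)) - 1 + 2 * Δ) / 2 +
          (2 * Δ - 1) * ((2 * (j : ℝ)) + 1) / 4 *
            (1 / (2 * (n : ℝ) - (2 * (j : ℝ)) - 1) - 1 / (2 * (n : ℝ) - (2 * (j : ℝ)) + 1))))) ∧
    (∀ n : ℕ, 1 ≤ n → n ≤ 2 * j →
      Tendsto (fun θ : ℝ =>
          4 * uEven j ((θ - Δ) / 2) ((θ + Δ) / 2) (1 / 2) n / θ ^ 2)
        atTop (𝓝 ((n : ℝ) * ((2 * (j : ℝ)) + 1 - n)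
          * (2 * (n : ℝ) - (2 * (j : ℝ)) - 2 * Δ)
          * (2 * (n : ℝ) - (2 * (j : ℝ)) - 2 + 2 * Δ) /
          (4 * (2 * (n : ℝ) - (2 * (j : ℝ)) - 1) ^ 2)))) :=
  ⟨fun n _ => tendsto_bEven_paraKrawtchouk j n Δ,
    fun n _ _ => tendsto_uEven_paraKrawtchouk j n Δ⟩

theorem paraRacahEven_to_paraKrawtchouk (j : ℕ) (hj : 1 ≤ j) (Δ : ℝ) :
    (∀ n : ℕ, n ≤ 2 * j →
      Tendsto (fun θ : ℝ =>
          -(2 * bEven j ((θ - Δ) / 2) ((θ + Δ) / 2) n + 2 * ((θ - Δ) / 2) ^ 2) / θ)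
        atTop (𝓝 (((2 * (j : ℝ)) - 1 + 2 * Δ) / 2 +
          (2 * Δ - 1) * ((2 * (j : ℝ)) + 1) / 4 *
            (1 / (2 * (n : ℝ) - (2 * (j : ℝ)) - 1) - 1 / (2 * (n : ℝ) - (2 * (j : ℝ)) + 1))))) ∧
    (∀ n : ℕ, 1 ≤ n → n ≤ 2 * j →
      Tendsto (fun θ : ℝ =>
          4 * uEven j ((θ - Δ) / 2) ((θ + Δ) / 2) (1 / 2) n / θ ^ 2)
        atTop (𝓝 ((n : ℝ) * ((2 * (j : ℝ)) + 1 - n)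
          * (2 * (n : ℝ) - (2 * (j : ℝ)) - 2 * Δ)
          * (2 * (n : ℝ) - (2 * (j : ℝ)) - 2 + 2 * Δ) /
          (4 * (2 * (n : ℝ) - (2 * (j : ℝ)) - 1) ^ 2)))) :=
  paraRacahEven_to_paraKrawtchouk_general j Δ
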